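/- (Theorem 3, right coaction) The assignments a ↦ a⊗a + b⊗c, b ↦ a⊗b + b⊗d, c ↦ c⊗a + d⊗c, d ↦ c⊗b + d⊗d, θⁱ ↦ θⁱ⊗1 (i = 0,1,2) extend to well-defined ℂ-algebra homomorphisms Δ_R : M_q^I → M_q^I ⊗ A_q and Δ_R : M_q^II → M_q^II ⊗ A_q. -/

import Mathlib

open scoped TensorProduct

noncomputable section
set_option synthInstance.maxHeartbeats 1000000
set_option maxHeartbeats 1000000

/-- The free ℂ-algebra on the generators `a, b, c, d, θ⁰, θ¹, θ²`. -/
abbrev F7 : Type := FreeAlgebra ℂ (Fin 7)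

/-- The generators: `a = g 0`, `b = g 1`, `c = g 2`, `d = g 3`, `θ⁰ = g 4`, `θ¹ = g 5`,
`θ² = g 6`. -/
def g (i : Fin 7) : F7 := FreeAlgebra.ι ℂ i

/-- The free ℂ-algebra on the generators `a, b, c, d`. -/
abbrev F4 : Type := FreeAlgebra ℂ (Fin 4)

def gA (i : Fin 4) : F4 := FreeAlgebra.ι ℂ i

/-- The defining relations of the function algebra `A_q = Fun(SL_q(2))`. -/
inductive RelA (q : ℂ) : F4 → F4 → Prop
  | rel_ab : RelA q (gA 0 * gA 1) (q • (gA 1 * gA 0))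
  | rel_ac : RelA q (gA 0 * gA 2) (q • (gA 2 * gA 0))
  | rel_bc : RelA q (gA 1 * gA 2) (gA 2 * gA 1)
  | rel_bd : RelA q (gA 1 * gA 3) (q • (gA 3 * gA 1))
  | rel_cd : RelA q (gA 2 * gA 3) (q • (gA 3 * gA 2))
  | rel_adda : RelA q (gA 0 * gA 3 - gA 3 * gA 0) ((q - q⁻¹) • (gA 1 * gA 2))
  | rel_det : RelA q (gA 0 * gA 3 - q • (gA 1 * gA 2)) 1

/-- `A_q = Fun(SL_q(2))`. -/
abbrev Aq (q : ℂ) : Type := RingQuot (RelA q)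

def mkAq (q : ℂ) : F4 →ₐ[ℂ] Aq q := RingQuot.mkAlgHom ℂ (RelA q)

def aq (q : ℂ) : Aq q := mkAq q (gA 0)
def bq (q : ℂ) : Aq q := mkAq q (gA 1)
def cq (q : ℂ) : Aq q := mkAq q (gA 2)
def dq (q : ℂ) : Aq q := mkAq q (gA 3)

/-- The defining relations of the quantum algebra (type I). -/
inductive RelI (q : ℂ) : F7 → F7 → Prop
  | rel_ab : RelI q (g 0 * g 1) (q • (g 1 * g 0))
  | rel_ac : RelI q (g 0 * g 2) (q • (g 2 * g 0))
  | rel_bc : RelI q (g 1 * g 2) (g 2 * g 1)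
  | rel_bd : RelI q (g 1 * g 3) (q • (g 3 * g 1))
  | rel_cd : RelI q (g 2 * g 3) (q • (g 3 * g 2))
  | rel_adda : RelI q (g 0 * g 3 - g 3 * g 0) ((q - q⁻¹) • (g 1 * g 2))
  | rel_det : RelI q (g 0 * g 3 - q • (g 1 * g 2)) 1
  | rel_t0a : RelI q (g 4 * g 0) (g 0 * g 4 + (q ^ 2 * (q - q⁻¹)) • (g 2 * g 5))
  | rel_t1a : RelI q (g 5 * g 0) (q⁻¹ • (g 0 * g 5))
  | rel_t2a : RelI q (g 6 * g 0) (q • (g 0 * g 6) - ((q - q⁻¹) * (q + q⁻¹)) • (g 2 * g 4))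
  | rel_t0b : RelI q (g 4 * g 1) (g 1 * g 4 + (q ^ 2 * (q - q⁻¹)) • (g 3 * g 5))
  | rel_t1b : RelI q (g 5 * g 1) (q⁻¹ • (g 1 * g 5))
  | rel_t2b : RelI q (g 6 * g 1) (q • (g 1 * g 6) - ((q - q⁻¹) * (q + q⁻¹)) • (g 3 * g 4))
  | rel_t0c : RelI q (g 4 * g 2) (g 2 * g 4)
  | rel_t1c : RelI q (g 5 * g 2) (q • (g 2 * g 5))
  | rel_t2c : RelI q (g 6 * g 2) (q⁻¹ • (g 2 * g 6))
  | rel_t0d : RelI q (g 4 * g 3) (g 3 * g 4)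
  | rel_t1d : RelI q (g 5 * g 3) (q • (g 3 * g 5))
  | rel_t2d : RelI q (g 6 * g 3) (q⁻¹ • (g 3 * g 6))
  | rel_th00 : RelI q (g 4 * g 4) ((q ^ 2 * (q - q⁻¹) / (q + q⁻¹)) • (g 5 * g 6))
  | rel_th11 : RelI q (g 5 * g 5) 0
  | rel_th22 : RelI q (g 6 * g 6) 0
  | rel_th12 : RelI q (g 5 * g 6) (-(g 6 * g 5))
  | rel_th10 : RelI q (g 5 * g 4) ((-(q ^ 2)⁻¹) • (g 4 * g 5))
  | rel_th20 : RelI q (g 6 * g 4) ((-(q ^ 2)) • (g 4 * g 6))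

/-- The type-I quantum algebra. -/
abbrev MqI (q : ℂ) : Type := RingQuot (RelI q)

def mkI (q : ℂ) : F7 →ₐ[ℂ] MqI q := RingQuot.mkAlgHom ℂ (RelI q)

def aI (q : ℂ) : MqI q := mkI q (g 0)
def bI (q : ℂ) : MqI q := mkI q (g 1)
def cI (q : ℂ) : MqI q := mkI q (g 2)
def dI (q : ℂ) : MqI q := mkI q (g 3)
def t0I (q : ℂ) : MqI q := mkI q (g 4)
def t1I (q : ℂ) : MqI q := mkI q (g 5)
def t2I (q : ℂ) : MqI q := mkI q (g 6)

/-- The defining relations of the quantum algebra (type II). -/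
inductive RelII (q : ℂ) : F7 → F7 → Prop
  | rel_ab : RelII q (g 0 * g 1) (q • (g 1 * g 0))
  | rel_ac : RelII q (g 0 * g 2) (q • (g 2 * g 0))
  | rel_bc : RelII q (g 1 * g 2) (g 2 * g 1)
  | rel_bd : RelII q (g 1 * g 3) (q • (g 3 * g 1))
  | rel_cd : RelII q (g 2 * g 3) (q • (g 3 * g 2))
  | rel_adda : RelII q (g 0 * g 3 - g 3 * g 0) ((q - q⁻¹) • (g 1 * g 2))
  | rel_det : RelII q (g 0 * g 3 - q • (g 1 * g 2)) 1
  | rel_t0a : RelII q (g 4 * g 0) (g 0 * g 4)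
  | rel_t1a : RelII q (g 5 * g 0) (q • (g 0 * g 5))
  | rel_t2a : RelII q (g 6 * g 0) (q⁻¹ • (g 0 * g 6))
  | rel_t0b : RelII q (g 4 * g 1) (g 1 * g 4)
  | rel_t1b : RelII q (g 5 * g 1) (q • (g 1 * g 5))
  | rel_t2b : RelII q (g 6 * g 1) (q⁻¹ • (g 1 * g 6))
  | rel_t0c : RelII q (g 4 * g 2) (g 2 * g 4 + (q - q⁻¹) • (g 0 * g 6))
  | rel_t1c : RelII q (g 5 * g 2) (q⁻¹ • (g 2 * g 5) - ((q - q⁻¹) * (q + q⁻¹) / q ^ 2) • (g 0 * g 4))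
  | rel_t2c : RelII q (g 6 * g 2) (q • (g 2 * g 6))
  | rel_t0d : RelII q (g 4 * g 3) (g 3 * g 4 + (q - q⁻¹) • (g 1 * g 6))
  | rel_t1d : RelII q (g 5 * g 3) (q⁻¹ • (g 3 * g 5) - ((q - q⁻¹) * (q + q⁻¹) / q ^ 2) • (g 1 * g 4))
  | rel_t2d : RelII q (g 6 * g 3) (q • (g 3 * g 6))
  | rel_th00 : RelII q (g 4 * g 4) ((q ^ 2 * (q - q⁻¹) / (q + q⁻¹)) • (g 5 * g 6))
  | rel_th11 : RelII q (g 5 * g 5) 0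
  | rel_th22 : RelII q (g 6 * g 6) 0
  | rel_th12 : RelII q (g 5 * g 6) (-(g 6 * g 5))
  | rel_th10 : RelII q (g 5 * g 4) ((-(q ^ 2)⁻¹) • (g 4 * g 5))
  | rel_th20 : RelII q (g 6 * g 4) ((-(q ^ 2)) • (g 4 * g 6))

/-- The type-II quantum algebra. -/
abbrev MqII (q : ℂ) : Type := RingQuot (RelII q)

def mkII (q : ℂ) : F7 →ₐ[ℂ] MqII q := RingQuot.mkAlgHom ℂ (RelII q)

def aII (q : ℂ) : MqII q := mkII q (g 0)
def bII (q : ℂ) : MqII q := mkII q (g 1)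
def cII (q : ℂ) : MqII q := mkII q (g 2)
def dII (q : ℂ) : MqII q := mkII q (g 3)
def t0II (q : ℂ) : MqII q := mkII q (g 4)
def t1II (q : ℂ) : MqII q := mkII q (g 5)
def t2II (q : ℂ) : MqII q := mkII q (g 6)

/-! On `a, b, c, d` the coaction is the matrix coproduct of `SL_q(2)`: the product of two
`q`-matrices whose entries commute with each other is again a `q`-matrix. Every relation between
a `θⁱ` and `a, b, c, d` is a relation between `θⁱ` and the rows `(a, b)`, `(c, d)` whose
coefficients do not depend on the column, while the coaction only mixes columns, so these
relations are carried over verbatim. The relations among the `θⁱ` survive because `θ ↦ θ ⊗ 1` is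
an algebra map. -/

section Presentation

variable {R X B : Type*} [CommRing R] [Semiring B] [Algebra R B]

def SatisfiesRels (r : FreeAlgebra R X → FreeAlgebra R X → Prop) (x : X → B) : Prop :=
  ∀ ⦃u v⦄, r u v → FreeAlgebra.lift R x u = FreeAlgebra.lift R x v

theorem satisfiesRels_mkAlgHom (r : FreeAlgebra R X → FreeAlgebra R X → Prop) :
    SatisfiesRels r (fun i ↦ RingQuot.mkAlgHom R r (FreeAlgebra.ι R i)) := by
  have lift_eq : FreeAlgebra.lift R (fun i ↦ RingQuot.mkAlgHom R r (FreeAlgebra.ι R i)) =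
      RingQuot.mkAlgHom R r :=
    FreeAlgebra.lift_comp_ι _
  intro u v h
  simpa only [lift_eq] using RingQuot.mkAlgHom_rel R h

theorem SatisfiesRels.exists_algHom {r : FreeAlgebra R X → FreeAlgebra R X → Prop} {x : X → B}
    (h : SatisfiesRels r x) :
    ∃ φ : RingQuot r →ₐ[R] B, ∀ i, φ (RingQuot.mkAlgHom R r (FreeAlgebra.ι R i)) = x i :=
  ⟨RingQuot.liftAlgHom R ⟨FreeAlgebra.lift R x, fun _ _ huv ↦ h huv⟩, fun i ↦ by simp⟩

end Presentation

section RowTensor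

variable (K : Type*) {M A : Type*} [CommSemiring K] [Semiring M] [Algebra K M] [Semiring A]
  [Algebra K A]

/-- Pairs a row `(x, y)` of a matrix over `M` with a column `(u, v)` of a matrix over `A`. -/
def rowTensor (u v : A) : M × M →ₗ[K] M ⊗[K] A :=
  (TensorProduct.mk K M A).flip u ∘ₗ LinearMap.fst K M M +
    (TensorProduct.mk K M A).flip v ∘ₗ LinearMap.snd K M M

variable {K}

@[simp]
theorem rowTensor_apply (u v : A) (r : M × M) : rowTensor K u v r = r.1 ⊗ₜ u + r.2 ⊗ₜ v := rfl

theorem tmul_one_mul_rowTensor (θ : M) (u v : A) (r : M × M) :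
    (θ ⊗ₜ[K] (1 : A)) * rowTensor K u v r = rowTensor K u v ((θ, θ) * r) := by
  simp [mul_add]

theorem rowTensor_mul_tmul_one (θ : M) (u v : A) (r : M × M) :
    rowTensor K u v r * (θ ⊗ₜ[K] (1 : A)) = rowTensor K u v (r * (θ, θ)) := by
  simp [add_mul]

end RowTensor

section SLqMatrix

variable {K M A : Type*} [Field K] [Ring M] [Algebra K M] [Ring A] [Algebra K A]

structure IsSLqMatrix (q : K) (a b c d : M) : Prop where
  ab : a * b = q • (b * a)
  ac : a * c = q • (c * a)
  bc : b * c = c * b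
  bd : b * d = q • (d * b)
  cd : c * d = q • (d * c)
  ad_sub_da : a * d - d * a = (q - q⁻¹) • (b * c)
  det : a * d - q • (b * c) = 1

namespace IsSLqMatrix

variable {q : K} {a b c d : M}

theorem ad_eq (h : IsSLqMatrix q a b c d) : a * d = 1 + q • (c * b) := by
  rw [← h.bc, ← h.det, sub_add_cancel]

theorem da_eq (h : IsSLqMatrix q a b c d) : d * a = 1 + q⁻¹ • (c * b) := by
  have h₁ := h.ad_sub_da
  rw [h.ad_eq, h.bc] at h₁
  have h₂ : d * a = 1 + q • (c * b) - (q - q⁻¹) • (c * b) := by rw [← h₁, sub_sub_cancel]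
  rw [h₂]
  module

/- Rewriting with the relations of both factors (`ad` and `da` become `1 + q^{±1} • cb`) brings
every product of two entries to a unique normal form, so each identity reduces to one between
scalars, which uses `q * q⁻¹ = 1`. -/
theorem tmul (hq : q ≠ 0) {a' b' c' d' : A} (h : IsSLqMatrix q a b c d)
    (h' : IsSLqMatrix q a' b' c' d') :
    IsSLqMatrix q (rowTensor K a' c' (a, b)) (rowTensor K b' d' (a, b))
      (rowTensor K a' c' (c, d)) (rowTensor K b' d' (c, d)) := by
  constructor <;>
    simp only [rowTensor_apply, mul_add, add_mul, sub_mul, smul_add,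
      Algebra.TensorProduct.tmul_mul_tmul, h.ab, h.ac, h.bc, h.bd, h.cd, h.ad_eq, h.da_eq,
      h'.ab, h'.ac, h'.bc, h'.bd, h'.cd, h'.ad_eq, h'.da_eq, TensorProduct.tmul_add,
      TensorProduct.add_tmul, TensorProduct.tmul_smul, ← TensorProduct.smul_tmul',
      Algebra.TensorProduct.one_def, smul_smul] <;>
    (match_scalars <;> grind)

end IsSLqMatrix

end SLqMatrix

@[simp]
theorem lift_g {B : Type*} [Semiring B] [Algebra ℂ B] (x : Fin 7 → B) (i : Fin 7) :
    FreeAlgebra.lift ℂ x (g i) = x i :=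
  FreeAlgebra.lift_ι_apply x i

@[simp]
theorem lift_gA {B : Type*} [Semiring B] [Algebra ℂ B] (x : Fin 4 → B) (i : Fin 4) :
    FreeAlgebra.lift ℂ x (gA i) = x i :=
  FreeAlgebra.lift_ι_apply x i

section Coaction

variable {M A : Type*} [Ring M] [Algebra ℂ M] [Ring A] [Algebra ℂ A] {q : ℂ}

theorem IsSLqMatrix.of_relA {y : Fin 4 → A} (hy : SatisfiesRels (RelA q) y) :
    IsSLqMatrix q (y 0) (y 1) (y 2) (y 3) :=
  ⟨by simpa using hy .rel_ab, by simpa using hy .rel_ac, by simpa using hy .rel_bc,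
    by simpa using hy .rel_bd, by simpa using hy .rel_cd, by simpa using hy .rel_adda,
    by simpa using hy .rel_det⟩

theorem IsSLqMatrix.of_relI {x : Fin 7 → M} (hx : SatisfiesRels (RelI q) x) :
    IsSLqMatrix q (x 0) (x 1) (x 2) (x 3) :=
  ⟨by simpa using hx .rel_ab, by simpa using hx .rel_ac, by simpa using hx .rel_bc,
    by simpa using hx .rel_bd, by simpa using hx .rel_cd, by simpa using hx .rel_adda,
    by simpa using hx .rel_det⟩

theorem IsSLqMatrix.of_relII {x : Fin 7 → M} (hx : SatisfiesRels (RelII q) x) :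
    IsSLqMatrix q (x 0) (x 1) (x 2) (x 3) :=
  ⟨by simpa using hx .rel_ab, by simpa using hx .rel_ac, by simpa using hx .rel_bc,
    by simpa using hx .rel_bd, by simpa using hx .rel_cd, by simpa using hx .rel_adda,
    by simpa using hx .rel_det⟩

def rightCoact (x : Fin 7 → M) (y : Fin 4 → A) : Fin 7 → M ⊗[ℂ] A :=
  ![rowTensor ℂ (y 0) (y 2) (x 0, x 1), rowTensor ℂ (y 1) (y 3) (x 0, x 1),
    rowTensor ℂ (y 0) (y 2) (x 2, x 3), rowTensor ℂ (y 1) (y 3) (x 2, x 3),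
    x 4 ⊗ₜ 1, x 5 ⊗ₜ 1, x 6 ⊗ₜ 1]

theorem satisfiesRels_rightCoact_relI (hq : q ≠ 0) {x : Fin 7 → M} {y : Fin 4 → A}
    (hx : SatisfiesRels (RelI q) x) (hy : SatisfiesRels (RelA q) y) :
    SatisfiesRels (RelI q) (rightCoact x y) := by
  have hT := (IsSLqMatrix.of_relI hx).tmul hq (IsSLqMatrix.of_relA hy)
  have t0_ab : (x 4, x 4) * (x 0, x 1) =
      (x 0, x 1) * (x 4, x 4) + (q ^ 2 * (q - q⁻¹)) • ((x 2, x 3) * (x 5, x 5)) :=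
    Prod.ext (by simpa using hx .rel_t0a) (by simpa using hx .rel_t0b)
  have t1_ab : (x 5, x 5) * (x 0, x 1) = q⁻¹ • ((x 0, x 1) * (x 5, x 5)) :=
    Prod.ext (by simpa using hx .rel_t1a) (by simpa using hx .rel_t1b)
  have t2_ab : (x 6, x 6) * (x 0, x 1) =
      q • ((x 0, x 1) * (x 6, x 6)) - ((q - q⁻¹) * (q + q⁻¹)) • ((x 2, x 3) * (x 4, x 4)) :=
    Prod.ext (by simpa using hx .rel_t2a) (by simpa using hx .rel_t2b)
  have t0_cd : (x 4, x 4) * (x 2, x 3) = (x 2, x 3) * (x 4, x 4) :=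
    Prod.ext (by simpa using hx .rel_t0c) (by simpa using hx .rel_t0d)
  have t1_cd : (x 5, x 5) * (x 2, x 3) = q • ((x 2, x 3) * (x 5, x 5)) :=
    Prod.ext (by simpa using hx .rel_t1c) (by simpa using hx .rel_t1d)
  have t2_cd : (x 6, x 6) * (x 2, x 3) = q⁻¹ • ((x 2, x 3) * (x 6, x 6)) :=
    Prod.ext (by simpa using hx .rel_t2c) (by simpa using hx .rel_t2d)
  intro u v h
  have hθ := congrArg (Algebra.TensorProduct.includeLeft : M →ₐ[ℂ] M ⊗[ℂ] A) (hx h)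
  cases h <;> simp only [map_mul, map_add, map_sub, map_smul, map_neg, map_one, map_zero, lift_g,
    rightCoact, Matrix.cons_val, Algebra.TensorProduct.includeLeft_apply] at hθ ⊢
  case rel_ab => exact hT.ab
  case rel_ac => exact hT.ac
  case rel_bc => exact hT.bc
  case rel_bd => exact hT.bd
  case rel_cd => exact hT.cd
  case rel_adda => exact hT.ad_sub_da
  case rel_det => exact hT.det
  case rel_th00 | rel_th11 | rel_th22 | rel_th12 | rel_th10 | rel_th20 => exact hθ
  case rel_t0a | rel_t0b | rel_t1a | rel_t1b | rel_t2a | rel_t2b | rel_t0c | rel_t0d | rel_t1c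
      | rel_t1d | rel_t2c | rel_t2d =>
    rw [tmul_one_mul_rowTensor]
    simp only [t0_ab, t1_ab, t2_ab, t0_cd, t1_cd, t2_cd, map_add, map_sub, map_smul,
      rowTensor_mul_tmul_one]

theorem satisfiesRels_rightCoact_relII (hq : q ≠ 0) {x : Fin 7 → M} {y : Fin 4 → A}
    (hx : SatisfiesRels (RelII q) x) (hy : SatisfiesRels (RelA q) y) :
    SatisfiesRels (RelII q) (rightCoact x y) := by
  have hT := (IsSLqMatrix.of_relII hx).tmul hq (IsSLqMatrix.of_relA hy)
  have t0_ab : (x 4, x 4) * (x 0, x 1) = (x 0, x 1) * (x 4, x 4) :=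
    Prod.ext (by simpa using hx .rel_t0a) (by simpa using hx .rel_t0b)
  have t1_ab : (x 5, x 5) * (x 0, x 1) = q • ((x 0, x 1) * (x 5, x 5)) :=
    Prod.ext (by simpa using hx .rel_t1a) (by simpa using hx .rel_t1b)
  have t2_ab : (x 6, x 6) * (x 0, x 1) = q⁻¹ • ((x 0, x 1) * (x 6, x 6)) :=
    Prod.ext (by simpa using hx .rel_t2a) (by simpa using hx .rel_t2b)
  have t0_cd : (x 4, x 4) * (x 2, x 3) =
      (x 2, x 3) * (x 4, x 4) + (q - q⁻¹) • ((x 0, x 1) * (x 6, x 6)) :=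
    Prod.ext (by simpa using hx .rel_t0c) (by simpa using hx .rel_t0d)
  have t1_cd : (x 5, x 5) * (x 2, x 3) = q⁻¹ • ((x 2, x 3) * (x 5, x 5)) -
      ((q - q⁻¹) * (q + q⁻¹) / q ^ 2) • ((x 0, x 1) * (x 4, x 4)) :=
    Prod.ext (by simpa using hx .rel_t1c) (by simpa using hx .rel_t1d)
  have t2_cd : (x 6, x 6) * (x 2, x 3) = q • ((x 2, x 3) * (x 6, x 6)) :=
    Prod.ext (by simpa using hx .rel_t2c) (by simpa using hx .rel_t2d)
  intro u v h
  have hθ := congrArg (Algebra.TensorProduct.includeLeft : M →ₐ[ℂ] M ⊗[ℂ] A) (hx h)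
  cases h <;> simp only [map_mul, map_add, map_sub, map_smul, map_neg, map_one, map_zero, lift_g,
    rightCoact, Matrix.cons_val, Algebra.TensorProduct.includeLeft_apply] at hθ ⊢
  case rel_ab => exact hT.ab
  case rel_ac => exact hT.ac
  case rel_bc => exact hT.bc
  case rel_bd => exact hT.bd
  case rel_cd => exact hT.cd
  case rel_adda => exact hT.ad_sub_da
  case rel_det => exact hT.det
  case rel_th00 | rel_th11 | rel_th22 | rel_th12 | rel_th10 | rel_th20 => exact hθ
  case rel_t0a | rel_t0b | rel_t1a | rel_t1b | rel_t2a | rel_t2b | rel_t0c | rel_t0d | rel_t1c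
      | rel_t1d | rel_t2c | rel_t2d =>
    rw [tmul_one_mul_rowTensor]
    simp only [t0_ab, t1_ab, t2_ab, t0_cd, t1_cd, t2_cd, map_add, map_sub, map_smul,
      rowTensor_mul_tmul_one]

end Coaction

theorem right_coaction_exists_general (q : ℂ) (hq0 : q ≠ 0) :
    (∃ φ : MqI q →ₐ[ℂ] MqI q ⊗[ℂ] Aq q,
      φ (aI q) = aI q ⊗ₜ aq q + bI q ⊗ₜ cq q ∧
      φ (bI q) = aI q ⊗ₜ bq q + bI q ⊗ₜ dq q ∧
      φ (cI q) = cI q ⊗ₜ aq q + dI q ⊗ₜ cq q ∧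
      φ (dI q) = cI q ⊗ₜ bq q + dI q ⊗ₜ dq q ∧
      φ (t0I q) = t0I q ⊗ₜ 1 ∧ φ (t1I q) = t1I q ⊗ₜ 1 ∧ φ (t2I q) = t2I q ⊗ₜ 1) ∧
    (∃ ψ : MqII q →ₐ[ℂ] MqII q ⊗[ℂ] Aq q,
      ψ (aII q) = aII q ⊗ₜ aq q + bII q ⊗ₜ cq q ∧
      ψ (bII q) = aII q ⊗ₜ bq q + bII q ⊗ₜ dq q ∧
      ψ (cII q) = cII q ⊗ₜ aq q + dII q ⊗ₜ cq q ∧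
      ψ (dII q) = cII q ⊗ₜ bq q + dII q ⊗ₜ dq q ∧
      ψ (t0II q) = t0II q ⊗ₜ 1 ∧ ψ (t1II q) = t1II q ⊗ₜ 1 ∧ ψ (t2II q) = t2II q ⊗ₜ 1) := by
  have hA := satisfiesRels_mkAlgHom (RelA q)
  obtain ⟨φ, hφ⟩ :=
    (satisfiesRels_rightCoact_relI hq0 (satisfiesRels_mkAlgHom (RelI q)) hA).exists_algHom
  obtain ⟨ψ, hψ⟩ :=
    (satisfiesRels_rightCoact_relII hq0 (satisfiesRels_mkAlgHom (RelII q)) hA).exists_algHom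
  exact ⟨⟨φ, hφ 0, hφ 1, hφ 2, hφ 3, hφ 4, hφ 5, hφ 6⟩,
    ⟨ψ, hψ 0, hψ 1, hψ 2, hψ 3, hψ 4, hψ 5, hψ 6⟩⟩

/-- **Theorem 3, right coaction.** The assignments
`a ↦ a⊗a + b⊗c`, `b ↦ a⊗b + b⊗d`, `c ↦ c⊗a + d⊗c`, `d ↦ c⊗b + d⊗d`, `θⁱ ↦ θⁱ⊗1`
extend to well-defined ℂ-algebra homomorphisms `Δ_R : M_q^I → M_q^I ⊗ A_q` and
`Δ_R : M_q^II → M_q^II ⊗ A_q`. -/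
theorem right_coaction_exists (q : ℂ) (hq0 : q ≠ 0) (hq1 : q ≠ 1) (hqm1 : q ≠ -1) :
    (∃ φ : MqI q →ₐ[ℂ] MqI q ⊗[ℂ] Aq q,
      φ (aI q) = aI q ⊗ₜ aq q + bI q ⊗ₜ cq q ∧
      φ (bI q) = aI q ⊗ₜ bq q + bI q ⊗ₜ dq q ∧
      φ (cI q) = cI q ⊗ₜ aq q + dI q ⊗ₜ cq q ∧
      φ (dI q) = cI q ⊗ₜ bq q + dI q ⊗ₜ dq q ∧
      φ (t0I q) = t0I q ⊗ₜ 1 ∧ φ (t1I q) = t1I q ⊗ₜ 1 ∧ φ (t2I q) = t2I q ⊗ₜ 1) ∧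
    (∃ ψ : MqII q →ₐ[ℂ] MqII q ⊗[ℂ] Aq q,
      ψ (aII q) = aII q ⊗ₜ aq q + bII q ⊗ₜ cq q ∧
      ψ (bII q) = aII q ⊗ₜ bq q + bII q ⊗ₜ dq q ∧
      ψ (cII q) = cII q ⊗ₜ aq q + dII q ⊗ₜ cq q ∧
      ψ (dII q) = cII q ⊗ₜ bq q + dII q ⊗ₜ dq q ∧
      ψ (t0II q) = t0II q ⊗ₜ 1 ∧ ψ (t1II q) = t1II q ⊗ₜ 1 ∧ ψ (t2II q) = t2II q ⊗ₜ 1) :=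
  right_coaction_exists_general q hq0

end
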